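/- arXiv:2505.02712 — 3 statements merged into one kernel-verified Lean document; each statement's English description precedes it below -/
import Mathlib

section
/- Let A be a finite set, let P : A → ℝ be a probability distribution on A with P(s) > 0 for every s ∈ A, and let k be a natural number with 1 ≤ k ≤ 100. Then the set M = {s ∈ A : P(s) ≥ k/100} satisfies: |M| ≤ 100/k − 1 if k divides 100 and |A| > 100/k, and |M| ≤ ⌊100/k⌋ otherwise. (The full upper-bound statement of the paper's Theorem A.1: for any attractor A of a Boolean network under the asynchronous update mode, the size of the pseudo-attractor found by Step I-1 of the pseudo-attractor identification procedure with k% identification threshold obeys this case-split bound.) -/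
/-- Full upper-bound statement of the paper's Theorem A.1: for a strictly positive
probability distribution `P` on the finite set `A` and threshold `k%`, the set
`M = {s ∈ A : P s ≥ k/100}` satisfies `|M| ≤ 100/k - 1` if `k ∣ 100` and
`|A| > 100/k`, and `|M| ≤ ⌊100/k⌋` otherwise. -/
theorem pseudo_attractor_size_bounds {α : Type*} (A : Finset α)
    (P : α → ℝ) (hPpos : ∀ s ∈ A, 0 < P s) (hP1 : ∑ s ∈ A, P s = 1)
    (k : ℕ) (hk1 : 1 ≤ k) (hk100 : k ≤ 100) :
    (k ∣ 100 ∧ 100 / k < A.card →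
      {s ∈ (A : Set α) | P s ≥ (k : ℝ) / 100}.ncard ≤ 100 / k - 1) ∧
    (¬ (k ∣ 100 ∧ 100 / k < A.card) →
      ({s ∈ (A : Set α) | P s ≥ (k : ℝ) / 100}.ncard : ℤ) ≤ ⌊(100 : ℝ) / (k : ℝ)⌋) := by
  classical
  set Mf := A.filter (fun s => P s ≥ (k : ℝ) / 100) with hMf
  have hset : {s ∈ (A : Set α) | P s ≥ (k : ℝ) / 100} = ↑Mf := by
    ext s; simp [hMf]
  have hncard : {s ∈ (A : Set α) | P s ≥ (k : ℝ) / 100}.ncard = Mf.card := by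
    rw [hset, Set.ncard_coe_finset]
  have hkpos : (0 : ℝ) < (k : ℝ) := by positivity
  have hsub : Mf ⊆ A := Finset.filter_subset _ _
  have hlow : (Mf.card : ℝ) * ((k : ℝ) / 100) ≤ ∑ s ∈ Mf, P s := by
    calc (Mf.card : ℝ) * ((k : ℝ) / 100) = ∑ _s ∈ Mf, (k : ℝ) / 100 := by
          rw [Finset.sum_const, nsmul_eq_mul]
      _ ≤ ∑ s ∈ Mf, P s :=
          Finset.sum_le_sum (fun s hs => (Finset.mem_filter.mp hs).2)
  have hup : ∑ s ∈ Mf, P s ≤ 1 := by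
    rw [← hP1]
    exact Finset.sum_le_sum_of_subset_of_nonneg hsub (fun s hs _ => (hPpos s hs).le)
  have hcardle : (Mf.card : ℝ) ≤ 100 / (k : ℝ) := by
    rw [le_div_iff₀ hkpos]
    nlinarith [hlow.trans hup]
  constructor
  · rintro ⟨hdvd, hAcard⟩
    have hkne : (k : ℝ) ≠ 0 := ne_of_gt hkpos
    have hcast : ((100 / k : ℕ) : ℝ) = 100 / (k : ℝ) := by
      rw [Nat.cast_div hdvd hkne]; norm_num
    have hnat : Mf.card ≤ 100 / k := by
      have h := hcardle; rw [← hcast] at h; exact_mod_cast h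
    have hne : Mf.card ≠ 100 / k := by
      intro heq
      have h1 : (1 : ℝ) ≤ ∑ s ∈ Mf, P s := by
        have hc : (Mf.card : ℝ) * ((k : ℝ) / 100) = 1 := by
          rw [heq, hcast]; field_simp
        linarith [hlow]
      have hssub : Mf ⊂ A := by
        refine hsub.ssubset_of_ne ?_
        intro h
        rw [h] at heq
        omega
      obtain ⟨s, hsA, hsM⟩ := Finset.exists_of_ssubset hssub
      have hpos : 0 < ∑ s ∈ A \ Mf, P s := by
        refine Finset.sum_pos (fun t ht => hPpos t (Finset.mem_sdiff.mp ht).1) ?_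
        exact ⟨s, Finset.mem_sdiff.mpr ⟨hsA, hsM⟩⟩
      have hsplit : ∑ s ∈ A \ Mf, P s + ∑ s ∈ Mf, P s = ∑ s ∈ A, P s :=
        Finset.sum_sdiff hsub
      linarith
    rw [hncard]; omega
  · intro _
    rw [hncard]
    exact Int.le_floor.mpr (by push_cast; exact hcardle)
end

section
/- Let k be a natural number with 1 ≤ k < 100 such that k divides 100, and let A be a finite set with |A| > 100/k. Then there exists a probability distribution P : A → ℝ on A with P(s) > 0 for every s ∈ A such that the set M = {s ∈ A : P(s) ≥ k/100} has cardinality exactly 100/k − 1. (Sharpness of the first case of the paper's Theorem A.1: the upper bound 100/k − 1 on the size of the identified pseudo-attractor is attained, e.g., by a distribution assigning probability k/100 to each of 100/k − 1 chosen states and distributing the remaining mass k/100 in positive amounts strictly below k/100 over the other states.) -/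
/-- Sharpness of the first case of the paper's Theorem A.1: if `1 ≤ k < 100`, `k ∣ 100`
and `|A| > 100/k`, then there is a strictly positive probability distribution `P` on `A`
with `|{s ∈ A : P s ≥ k/100}| = 100/k - 1`. -/
theorem pseudo_attractor_bound_sharp_of_dvd {α : Type*} (A : Finset α)
    (k : ℕ) (hk1 : 1 ≤ k) (hk100 : k < 100) (hdvd : k ∣ 100)
    (hcard : 100 / k < A.card) :
    ∃ P : α → ℝ, (∀ s ∈ A, 0 < P s) ∧ (∑ s ∈ A, P s = 1) ∧
      {s ∈ (A : Set α) | P s ≥ (k : ℝ) / 100}.ncard = 100 / k - 1 := by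
  classical
  set m := 100 / k with hmdef
  have hkm : k * m = 100 := Nat.mul_div_cancel' hdvd
  have hm2 : 2 ≤ m := by
    by_contra h
    push_neg at h
    interval_cases m <;> omega
  obtain ⟨B, hBA, hBcard⟩ := Finset.exists_subset_card_eq (le_of_lt
    (lt_of_le_of_lt (Nat.sub_le m 1) hcard) : m - 1 ≤ A.card)
  set c := (A \ B).card with hcdef
  have hc : c = A.card - (m - 1) := by rw [hcdef, Finset.card_sdiff_of_subset hBA, hBcard]
  have hc2 : 2 ≤ c := by omega
  have hcR : (0:ℝ) < (c:ℝ) := by positivity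
  have hkR : (0:ℝ) < (k:ℝ) := by exact_mod_cast hk1
  set P : α → ℝ := fun s => if s ∈ B then (k:ℝ)/100 else (k:ℝ)/(100*c) with hP
  have hsmall : (k:ℝ)/(100*c) < (k:ℝ)/100 := by
    apply div_lt_div_of_pos_left hkR (by norm_num)
    have : (2:ℝ) ≤ (c:ℝ) := by exact_mod_cast hc2
    nlinarith
  refine ⟨P, ?_, ?_, ?_⟩
  · intro s _
    by_cases hs : s ∈ B <;> simp [hP, hs] <;> positivity
  · have hsplit : ∑ s ∈ A \ B, P s + ∑ s ∈ B, P s = ∑ s ∈ A, P s :=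
      Finset.sum_sdiff hBA
    have h1 : ∑ s ∈ B, P s = (m - 1 : ℕ) * ((k:ℝ)/100) := by
      rw [Finset.sum_congr rfl
        (fun s hs => show P s = (k:ℝ)/100 by simp [hP, hs]),
        Finset.sum_const, nsmul_eq_mul, hBcard]
    have h2 : ∑ s ∈ A \ B, P s = (c:ℝ) * ((k:ℝ)/(100*c)) := by
      rw [Finset.sum_congr rfl
        (fun s hs => show P s = (k:ℝ)/(100*c) by
          simp [hP, (Finset.mem_sdiff.mp hs).2]),
        Finset.sum_const, nsmul_eq_mul]
    rw [← hsplit, h1, h2]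
    have hm1 : ((m - 1 : ℕ) : ℝ) = (m:ℝ) - 1 := by
      have : 1 ≤ m := by omega
      push_cast [this]; ring
    have hkmR : (k:ℝ) * (m:ℝ) = 100 := by exact_mod_cast hkm
    field_simp [hm1]
    nlinarith
  · have hset : {s ∈ (A : Set α) | P s ≥ (k : ℝ) / 100} = (B : Set α) := by
      ext s
      simp only [Set.mem_setOf_eq, Set.mem_sep_iff, Finset.mem_coe]
      constructor
      · rintro ⟨hsA, hge⟩
        by_contra hs
        simp only [hP, if_neg hs] at hge
        exact absurd hge (not_le.mpr hsmall)
      · intro hs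
        exact ⟨hBA hs, by simp [hP, hs]⟩
    rw [hset, Set.ncard_coe_finset, hBcard]
end

section
/- Let k be a natural number with 1 ≤ k ≤ 100 such that k does not divide 100, and let A be a finite set with |A| > ⌊100/k⌋. Then there exists a probability distribution P : A → ℝ on A with P(s) > 0 for every s ∈ A such that the set M = {s ∈ A : P(s) ≥ k/100} has cardinality exactly ⌊100/k⌋. (Sharpness of the second case of the paper's Theorem A.1 when 100 mod k ≠ 0 and |A| > ⌊100/k⌋: the upper bound ⌊100/k⌋ is attained, e.g., by assigning probability k/100 to each of ⌊100/k⌋ chosen states and distributing the remaining mass ε·k/100, where ε = 100/k − ⌊100/k⌋ > 0, in positive amounts strictly below k/100 over the other states.) -/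
/-!
Put mass `k/100` on `⌊100/k⌋` states of `A`. Since `k ∤ 100`, this leaves a positive remainder
`1 - ⌊100/k⌋ k/100`, which is less than `k/100`; spreading it evenly over the remaining (nonempty)
set of states gives each of them a positive mass below the threshold.
-/

open Finset

theorem exists_pos_sum_eq_one_card_filter_le_eq {α : Type*} [DecidableEq α] (A : Finset α)
    {t : ℝ} {m : ℕ} (hmA : m < #A) (hm_lt : m * t < 1) (hm_succ : 1 < (m + 1) * t) :
    ∃ P : α → ℝ, (∀ s ∈ A, 0 < P s) ∧ ∑ s ∈ A, P s = 1 ∧ #{s ∈ A | t ≤ P s} = m := by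
  obtain ⟨B, hBA, hB⟩ := exists_subset_card_eq hmA.le
  have hrest : (1 : ℝ) ≤ #(A \ B) := by
    rw [card_sdiff_of_subset hBA, hB]; exact_mod_cast Nat.sub_pos_of_lt hmA
  set c : ℝ := (1 - m * t) / #(A \ B)
  have hc_pos : 0 < c := div_pos (by linarith) (by linarith)
  have hc_lt : c < t := by
    rw [div_lt_iff₀ (by linarith)]
    nlinarith
  refine ⟨B.piecewise (fun _ => t) (fun _ => c), fun s _ => ?_, ?_, ?_⟩
  · by_cases hs : s ∈ B
    · rw [piecewise_eq_of_mem _ _ _ hs]; nlinarith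
    · rw [piecewise_eq_of_notMem _ _ _ hs]; exact hc_pos
  · rw [sum_piecewise, inter_eq_right.mpr hBA, sum_const, sum_const, hB, nsmul_eq_mul,
      nsmul_eq_mul, mul_div_cancel₀ _ (by linarith)]
    ring
  · convert hB using 2
    ext s
    by_cases hs : s ∈ B
    · simp [hs, hBA hs]
    · simp [hs, hc_lt.not_ge]

theorem Finset.ncard_sep_eq_card_filter {α : Type*} (A : Finset α) (p : α → Prop)
    [DecidablePred p] :
    {s ∈ (A : Set α) | p s}.ncard = #{s ∈ A | p s} := by
  rw [← Set.ncard_coe_finset, coe_filter]; rfl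

theorem Int.floor_natCast_div_natCast_eq_div {K : Type*} [Field K] [LinearOrder K]
    [IsStrictOrderedRing K] [FloorRing K] (n k : ℕ) : ⌊(n : K) / k⌋ = ((n / k : ℕ) : ℤ) := by
  rw [← Int.natCast_floor_eq_floor (by positivity), Nat.floor_div_eq_div]

theorem pseudo_attractor_bound_sharp_of_not_dvd_general {α : Type*} (A : Finset α)
    (k : ℕ) (hk1 : 1 ≤ k) (hndvd : ¬ k ∣ 100)
    (hcard : ⌊(100 : ℝ) / (k : ℝ)⌋ < (A.card : ℤ)) :
    ∃ P : α → ℝ, (∀ s ∈ A, 0 < P s) ∧ (∑ s ∈ A, P s = 1) ∧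
      ({s ∈ (A : Set α) | P s ≥ (k : ℝ) / 100}.ncard : ℤ) = ⌊(100 : ℝ) / (k : ℝ)⌋ := by
  classical
  have hfloor : ⌊(100 : ℝ) / k⌋ = ((100 / k : ℕ) : ℤ) :=
    mod_cast Int.floor_natCast_div_natCast_eq_div 100 k
  have hlt : k * (100 / k) < 100 := Nat.mul_div_lt_iff_not_dvd.mpr hndvd
  have hsucc : 100 < k * (100 / k + 1) := Nat.lt_mul_div_succ 100 hk1
  obtain ⟨P, hP_pos, hP_sum, hP_card⟩ := exists_pos_sum_eq_one_card_filter_le_eq A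
    (t := k / 100) (m := 100 / k) (by rw [hfloor] at hcard; exact_mod_cast hcard)
    (by rw [mul_div_assoc', div_lt_one (by norm_num), mul_comm]; exact_mod_cast hlt)
    (by rw [mul_div_assoc', one_lt_div (by norm_num), mul_comm]; exact_mod_cast hsucc)
  refine ⟨P, hP_pos, hP_sum, ?_⟩
  simp only [ge_iff_le, ncard_sep_eq_card_filter, hP_card, hfloor]

/-- Sharpness of the second case of the paper's Theorem A.1 when `100 mod k ≠ 0` and
`|A| > ⌊100/k⌋`: there is a strictly positive probability distribution `P` on `A` with
`|{s ∈ A : P s ≥ k/100}| = ⌊100/k⌋`. -/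
theorem pseudo_attractor_bound_sharp_of_not_dvd {α : Type*} (A : Finset α)
    (k : ℕ) (hk1 : 1 ≤ k) (hk100 : k ≤ 100) (hndvd : ¬ k ∣ 100)
    (hcard : ⌊(100 : ℝ) / (k : ℝ)⌋ < (A.card : ℤ)) :
    ∃ P : α → ℝ, (∀ s ∈ A, 0 < P s) ∧ (∑ s ∈ A, P s = 1) ∧
      ({s ∈ (A : Set α) | P s ≥ (k : ℝ) / 100}.ncard : ℤ) = ⌊(100 : ℝ) / (k : ℝ)⌋ :=
  pseudo_attractor_bound_sharp_of_not_dvd_general A k hk1 hndvd hcard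
end
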